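/- Let r ≥ 2 and R(x,y) = x_1 y_{r,r} ∏_{i=2}^{r−1}( (∑_{j=1}^{i} x_j) y_{i,i} + ∑_{j=i+1}^{r} x_i y_{i,j} ). Then y_{1,1}·R(x,y) = ∑_{π ∈ Π_1({1,...,r})} D(π) · ∑_{c ∈ C(π)} ω(c,π), where, for a partition π with blocks π_1={1}, π_2, ..., π_k indexed so that their maxima satisfy μ_1=1 < μ_2 < ⋯ < μ_k, C(π) = {(c_2,...,c_{k−1}) : 1 ≤ c_i ≤ μ_i}, ω(c,π) = (x_{c_2}⋯x_{c_{k−1}} / (x_{μ_2}⋯x_{μ_k})) · ∏_{i=1}^{r} x_i, and D(π) = ∑_g ∏_i y_{i,g(i)} over dominating functions g on {1,...,r} with induced partition π. -/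

import Mathlib

open scoped Classical

/-- The field of rational functions in the commuting indeterminates `x_i` and
`y_{i,j}`. -/
noncomputable abbrev F : Type := FractionRing (MvPolynomial (ℕ ⊕ ℕ × ℕ) ℚ)

/-- The indeterminate `x_n`, viewed in the field `F`. -/
noncomputable def x (n : ℕ) : F :=
  algebraMap (MvPolynomial (ℕ ⊕ ℕ × ℕ) ℚ) F (MvPolynomial.X (Sum.inl n))

/-- The indeterminate `y_{i,j}`, viewed in the field `F`. -/
noncomputable def y (i j : ℕ) : F :=
  algebraMap (MvPolynomial (ℕ ⊕ ℕ × ℕ) ℚ) F (MvPolynomial.X (Sum.inr (i, j)))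

/-- `π` is a set partition of `{1,…,r}` having `{1}` (the vertex of index `0`)
as a block. -/
def IsPartition1 {r : ℕ} (π : Finset (Finset (Fin r))) : Prop :=
  (∀ B ∈ π, B.Nonempty) ∧ (∀ v : Fin r, ∃! B, B ∈ π ∧ v ∈ B) ∧
    Finset.univ.filter (fun v : Fin r => v.val = 0) ∈ π

/-- The function `g` is dominating: `g(i) ≥ i` for all `i`. -/
def Dominating {r : ℕ} (g : Fin r → Fin r) : Prop := ∀ i, i ≤ g i

/-- The partition induced by `g` is `π`: two elements lie in the same block of
`π` exactly when they lie in the same weakly connected component of the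
functional digraph of `g` (with edges `(i, g i)`). -/
def InducesPartition {r : ℕ} (g : Fin r → Fin r) (π : Finset (Finset (Fin r))) : Prop :=
  ∀ i j : Fin r, (∃ B ∈ π, i ∈ B ∧ j ∈ B) ↔ Relation.EqvGen (fun a b => g a = b) i j

/-- `D(π) = ∑_g ∏_i y_{i,g(i)}`, summed over dominating functions on `{1,…,r}`
with induced partition `π`. -/
noncomputable def D {r : ℕ} (π : Finset (Finset (Fin r))) : F :=
  ∑ g ∈ Finset.univ.filter
      (fun g : Fin r → Fin r => Dominating g ∧ InducesPartition g π),
    ∏ i : Fin r, y (i.val + 1) ((g i).val + 1)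

/-- `μ_i` (for `1 ≤ i ≤ |π|`): the `i`-th smallest of the maxima of the blocks
of `π`, recorded as a label in `{1,…,r}`. -/
noncomputable def mu {r : ℕ} (π : Finset (Finset (Fin r))) (i : ℕ) : ℕ :=
  ((π.image (fun B => B.sup (fun v => v.val + 1))).sort (· ≤ ·)).getD (i - 1) 0

/-- `C(π)`: the set of tuples `(c_2, …, c_{k-1})` with `1 ≤ c_i ≤ μ_i`,
where `k = |π|`. -/
noncomputable def C {r : ℕ} (π : Finset (Finset (Fin r))) :
    Finset (∀ i ∈ Finset.Icc 2 (π.card - 1), ℕ) :=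
  (Finset.Icc 2 (π.card - 1)).pi (fun i => Finset.Icc 1 (mu π i))

/-- `ω(c,π) = (x_{c_2} ⋯ x_{c_{k-1}} / (x_{μ_2} ⋯ x_{μ_k})) ∏_{i=1}^r x_i`. -/
noncomputable def omega {r : ℕ} (π : Finset (Finset (Fin r)))
    (c : ∀ i ∈ Finset.Icc 2 (π.card - 1), ℕ) : F :=
  (∏ i ∈ (Finset.Icc 2 (π.card - 1)).attach, x (c i.1 i.2)) /
      (∏ i ∈ Finset.Icc 2 π.card, x (mu π i)) *
    ∏ i ∈ Finset.Icc 1 r, x i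

/-!
The functional digraph of a dominating function `g` is a forest whose roots are the fixed points
of `g`: following `g` from `i` climbs until it stops at a root, and the induced partition is the
family of fibres of this root map. Such a partition contains `{1}` exactly when `g(1) = 1`, and
its block maxima are the roots. Hence `∑_c ω(c, π)` for the partition of `g` splits into
per-vertex factors: a non-root `i` contributes `x_i`, a root `i < r` contributes
`x_1 + ⋯ + x_i` and the root `r` contributes `1`. The right-hand side thus becomes a sum over the
dominating `g` with `g(1) = 1` of a product of independent per-vertex weights `y_{i,g(i)} · (…)`,
which factors as the product over `i` of the row sums; these are the factors of `y_{1,1} R(x,y)`.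
-/

open Finset

theorem eqvGen_iterate {α : Type*} (f : α → α) (i : α) (n : ℕ) :
    Relation.EqvGen (fun a b => f a = b) i (f^[n] i) := by
  induction n with
  | zero => exact .refl i
  | succ n ih =>
    rw [Function.iterate_succ_apply']
    exact ih.trans _ _ _ (.rel _ _ rfl)

theorem mem_block_iff_sameBlock {α : Type*} {π : Finset (Finset α)}
    (hπ : ∀ v : α, ∃! B, B ∈ π ∧ v ∈ B) {B : Finset α} (hB : B ∈ π) {i j : α}
    (hi : i ∈ B) : j ∈ B ↔ ∃ B' ∈ π, i ∈ B' ∧ j ∈ B' := by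
  refine ⟨fun hj => ⟨B, hB, hi, hj⟩, ?_⟩
  rintro ⟨B', hB', hiB', hjB'⟩
  rwa [(hπ i).unique ⟨hB, hi⟩ ⟨hB', hiB'⟩]

section

variable {r : ℕ} {g : Fin r → Fin r}

/-- For dominating `g`, the fixed point at which the orbit of `i` stops. -/
def root (g : Fin r → Fin r) (i : Fin r) : Fin r := g^[r] i

theorem root_eq_self {p : Fin r} (hp : g p = p) : root g p = p :=
  Function.iterate_fixed hp r

namespace Dominating

theorem le_iterate (hg : Dominating g) (i : Fin r) (n : ℕ) : i ≤ g^[n] i := by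
  induction n with
  | zero => exact le_rfl
  | succ n ih => exact ih.trans (by rw [Function.iterate_succ_apply']; exact hg _)

theorem le_root (hg : Dominating g) (i : Fin r) : i ≤ root g i := hg.le_iterate i r

-- Until it reaches a fixed point the orbit climbs by at least one per step, and `Fin r` has
-- no chain of length `r + 1`.
theorem apply_root (hg : Dominating g) (i : Fin r) : g (root g i) = root g i := by
  have climb : ∀ n : ℕ, i.val + n ≤ (g^[n] i).val ∨ g (g^[n] i) = g^[n] i := by
    intro n
    induction n with
    | zero => exact .inl le_rfl
    | succ n ih =>
      rw [Function.iterate_succ_apply']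
      rcases ih with h | h
      · rcases (hg (g^[n] i)).eq_or_lt with h' | h'
        · exact .inr (congrArg g h'.symm)
        · exact .inl (by rw [Fin.lt_def] at h'; omega)
      · exact .inr (by rw [h, h])
  exact (climb r).resolve_left (by have := (root g i).isLt; unfold root at this; omega)

theorem root_apply (hg : Dominating g) (i : Fin r) : root g (g i) = root g i := by
  rw [root, ← Function.iterate_succ_apply, Function.iterate_succ_apply']
  exact hg.apply_root i

theorem eqvGen_iff_root_eq (hg : Dominating g) {i j : Fin r} :
    Relation.EqvGen (fun a b => g a = b) i j ↔ root g i = root g j := by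
  refine ⟨fun h => ?_, fun h => ?_⟩
  · induction h with
    | rel a b hab => rw [← hab, hg.root_apply]
    | refl => rfl
    | symm _ _ _ ih => exact ih.symm
    | trans _ _ _ _ _ ih₁ ih₂ => exact ih₁.trans ih₂
  · have hj : Relation.EqvGen (fun a b => g a = b) (root g i) j := by
      rw [h]; exact (eqvGen_iterate g j r).symm _ _
    exact (eqvGen_iterate g i r).trans _ _ _ hj

end Dominating

def fixedPts (g : Fin r → Fin r) : Finset (Fin r) := univ.filter (fun p => g p = p)

/-- The components of the functional digraph of a dominating `g`. -/
def rootFibres (g : Fin r → Fin r) : Finset (Finset (Fin r)) :=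
  (fixedPts g).image (fun p => univ.filter (fun i => root g i = p))

theorem mem_fixedPts {p : Fin r} : p ∈ fixedPts g ↔ g p = p := by simp [fixedPts]

theorem mem_rootFibres {B : Finset (Fin r)} :
    B ∈ rootFibres g ↔ ∃ p, g p = p ∧ univ.filter (fun i => root g i = p) = B := by
  simp [rootFibres, fixedPts]

theorem apply_zero_of_induces [NeZero r] {π : Finset (Finset (Fin r))} (hπ : IsPartition1 π)
    (hind : InducesPartition g π) : g 0 = 0 := by
  obtain ⟨B, hB, h0B, hgB⟩ := (hind 0 (g 0)).mpr (.rel _ _ rfl)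
  have hg0 := (mem_block_iff_sameBlock hπ.2.1 hπ.2.2 (by simp)).mpr ⟨B, hB, h0B, hgB⟩
  exact Fin.ext (mem_filter.mp hg0).2

namespace Dominating

theorem induces_rootFibres (hg : Dominating g) : InducesPartition g (rootFibres g) := by
  intro i j
  rw [hg.eqvGen_iff_root_eq]
  constructor
  · rintro ⟨B, hB, hi, hj⟩
    obtain ⟨p, -, rfl⟩ := mem_rootFibres.mp hB
    simp only [mem_filter, mem_univ, true_and] at hi hj
    rw [hi, hj]
  · intro h
    exact ⟨_, mem_rootFibres.mpr ⟨root g i, hg.apply_root i, rfl⟩, by simp, by simp [h]⟩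

theorem isPartition1_rootFibres [NeZero r] (hg : Dominating g) (h0 : g 0 = 0) :
    IsPartition1 (rootFibres g) := by
  refine ⟨?_, fun v => ?_, ?_⟩
  · intro B hB
    obtain ⟨p, hp, rfl⟩ := mem_rootFibres.mp hB
    exact ⟨p, by simp [root_eq_self hp]⟩
  · refine ⟨_, ⟨mem_rootFibres.mpr ⟨root g v, hg.apply_root v, rfl⟩, by simp⟩, ?_⟩
    rintro B ⟨hB, hv⟩
    obtain ⟨p, -, rfl⟩ := mem_rootFibres.mp hB
    rw [(mem_filter.mp hv).2]
  · refine mem_rootFibres.mpr ⟨0, h0, ?_⟩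
    ext i
    simp only [mem_filter, mem_univ, true_and]
    refine ⟨fun h => ?_, fun h => ?_⟩
    · have hi := hg.le_root i
      rw [h, Fin.le_def] at hi
      simpa using hi
    · rw [show i = 0 from Fin.ext (by simpa using h), root_eq_self h0]

theorem eq_rootFibres (hg : Dominating g) {π : Finset (Finset (Fin r))}
    (hπ : IsPartition1 π) (hind : InducesPartition g π) : π = rootFibres g := by
  have block_eq : ∀ B ∈ π, ∀ i ∈ B, B = univ.filter (fun j => root g j = root g i) := by
    intro B hB i hi
    ext j
    rw [mem_block_iff_sameBlock hπ.2.1 hB hi, mem_filter]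
    exact (hind i j).trans (hg.eqvGen_iff_root_eq.trans eq_comm) |>.trans (by simp)
  ext B
  constructor
  · intro hB
    obtain ⟨i, hi⟩ := hπ.1 B hB
    exact mem_rootFibres.mpr ⟨root g i, hg.apply_root i, (block_eq B hB i hi).symm⟩
  · intro hB
    obtain ⟨p, hp, rfl⟩ := mem_rootFibres.mp hB
    obtain ⟨B, ⟨hB, hpB⟩, -⟩ := hπ.2.1 p
    rwa [block_eq B hB p hpB, root_eq_self hp] at hB

theorem isPartition1_and_induces_iff [NeZero r] (hg : Dominating g)
    {π : Finset (Finset (Fin r))} :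
    IsPartition1 π ∧ InducesPartition g π ↔ g 0 = 0 ∧ π = rootFibres g := by
  constructor
  · rintro ⟨hπ, hind⟩
    exact ⟨apply_zero_of_induces hπ hind, hg.eq_rootFibres hπ hind⟩
  · rintro ⟨h0, rfl⟩
    exact ⟨hg.isPartition1_rootFibres h0, hg.induces_rootFibres⟩

end Dominating

end

section SortGetD

variable {α : Type*} [LinearOrder α] (S : Finset α) (d : α)

theorem injOn_sort_getD_pred :
    Set.InjOn (fun i => (S.sort (· ≤ ·)).getD (i - 1) d) (Icc 1 #S) := by
  intro i hi j hj hij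
  simp only [coe_Icc, Set.mem_Icc] at hi hj
  have hlen := length_sort (s := S) (· ≤ ·)
  dsimp only at hij
  rw [List.getD_eq_getElem _ _ (show i - 1 < (S.sort (· ≤ ·)).length by omega),
    List.getD_eq_getElem _ _ (show j - 1 < (S.sort (· ≤ ·)).length by omega)] at hij
  have := (sort_nodup S (· ≤ ·)).getElem_inj_iff.mp hij
  omega

theorem image_sort_getD_pred :
    (Icc 1 #S).image (fun i => (S.sort (· ≤ ·)).getD (i - 1) d) = S := by
  have hlen := length_sort (s := S) (· ≤ ·)
  ext s
  simp only [mem_image, mem_Icc]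
  constructor
  · rintro ⟨i, hi, rfl⟩
    rw [List.getD_eq_getElem _ _ (by omega)]
    exact (mem_sort _).mp (List.getElem_mem _)
  · intro hs
    obtain ⟨n, hn, rfl⟩ := List.getElem_of_mem ((mem_sort (· ≤ ·)).mpr hs)
    exact ⟨n + 1, by omega, by rw [Nat.add_sub_cancel, List.getD_eq_getElem _ _ hn]⟩

theorem prod_Icc_sdiff_sort_getD_pred {M : Type*} [CommMonoid M] {T : Finset ℕ}
    (hT : T ⊆ Icc 1 #S) (f : α → M) :
    ∏ i ∈ Icc 1 #S \ T, f ((S.sort (· ≤ ·)).getD (i - 1) d)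
      = ∏ s ∈ S \ T.image (fun i => (S.sort (· ≤ ·)).getD (i - 1) d), f s := by
  have himage := image_sdiff_of_injOn (injOn_sort_getD_pred S d) hT
  rw [image_sort_getD_pred] at himage
  rw [← himage, prod_image ((injOn_sort_getD_pred S d).mono (by simp))]

theorem sort_getD_zero (h : S.Nonempty) : (S.sort (· ≤ ·)).getD 0 d = S.min' h := by
  rw [List.getD_eq_getElem _ _ (by simpa using h.card_pos), sorted_zero_eq_min']

theorem sort_getD_card_sub_one (h : S.Nonempty) :
    (S.sort (· ≤ ·)).getD (#S - 1) d = S.max' h := by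
  have hlen := length_sort (s := S) (· ≤ ·)
  have hpos := h.card_pos
  rw [List.getD_eq_getElem _ _ (by omega)]
  simp only [← hlen, sorted_last_eq_max']

end SortGetD

theorem x_ne_zero (n : ℕ) : x n ≠ 0 :=
  (map_ne_zero_iff _ (IsFractionRing.injective _ _)).mpr (MvPolynomial.X_ne_zero _)

noncomputable def prefixSum (m : ℕ) : F := ∑ j ∈ Icc 1 m, x j

theorem sum_C_omega {r : ℕ} (π : Finset (Finset (Fin r))) :
    ∑ c ∈ C π, omega π c
      = (∏ i ∈ Icc 2 (#π - 1), prefixSum (mu π i)) / (∏ i ∈ Icc 2 #π, x (mu π i)) *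
          ∏ j ∈ Icc 1 r, x j := by
  simp only [omega, C, prefixSum, ← sum_mul, ← sum_div, prod_sum]

/-- The `x`-part of the weight of the edge `a ↦ b` of a dominating function, in the labels
`1, …, r`; `b = a` means that `a` is a root. -/
noncomputable def xWeight (r a b : ℕ) : F :=
  if b = a then (if a = r then 1 else prefixSum a) else x a

theorem prod_prefixSum_div_prod_mul_prod_x {r : ℕ} {S : Finset ℕ} (hS : S ⊆ Icc 1 r)
    (h1 : 1 ∈ S) (hr : r ∈ S) (h1r : 1 ≠ r) :
    (∏ s ∈ S \ {1, r}, prefixSum s) / (∏ s ∈ S \ {1}, x s) * ∏ a ∈ Icc 1 r, x a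
      = ∏ a ∈ Icc 1 r, if a ∈ S then (if a = r then 1 else prefixSum a) else x a := by
  have hroots : ∏ s ∈ S, (if s = r then 1 else prefixSum s)
      = x 1 * ∏ s ∈ S \ {1, r}, prefixSum s := by
    rw [← mul_prod_erase _ _ h1, ← mul_prod_erase _ _ (mem_erase.mpr ⟨h1r.symm, hr⟩),
      if_neg h1r, if_pos rfl, prefixSum, Icc_self, sum_singleton, one_mul, sdiff_insert,
      sdiff_singleton_eq_erase, erase_right_comm]
    congr 1
    exact prod_congr rfl fun s hs => if_neg (by simp at hs; tauto)
  rw [prod_ite, filter_mem_eq_inter, inter_eq_right.mpr hS, hroots, filter_not,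
    filter_mem_eq_inter, inter_eq_right.mpr hS, ← prod_sdiff hS, sdiff_singleton_eq_erase,
    ← mul_prod_erase _ _ h1]
  have hden : ∏ s ∈ S.erase 1, x s ≠ 0 := prod_ne_zero_iff.mpr fun s _ => x_ne_zero s
  field_simp

theorem sum_Icc_xWeight {r a : ℕ} (ha : a < r) :
    ∑ b ∈ Icc a r, y a b * xWeight r a b
      = prefixSum a * y a a + ∑ b ∈ Icc (a + 1) r, x a * y a b := by
  rw [← insert_Icc_add_one_left_eq_Icc ha.le, sum_insert (by simp), xWeight, if_pos rfl,
    if_neg ha.ne, mul_comm]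
  exact congrArg _ (sum_congr rfl fun b hb => by
    rw [xWeight, if_neg (by simp at hb; omega), mul_comm])

theorem sum_Ici_val_add_one {M : Type*} [AddCommMonoid M] {r : ℕ} (i : Fin r) (f : ℕ → M) :
    ∑ v ∈ Ici i, f (v + 1) = ∑ b ∈ Icc ((i : ℕ) + 1) r, f b := by
  rw [← Ico_add_one_right_eq_Icc, ← sum_Ico_add', ← Fin.map_valEmbedding_Ici, sum_map]
  rfl

theorem prod_univ_val_add_one {M : Type*} [CommMonoid M] {r : ℕ} (f : ℕ → M) :
    ∏ i : Fin r, f (i + 1) = ∏ a ∈ Icc 1 r, f a := by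
  rw [Fin.prod_univ_eq_prod_range (fun i => f (i + 1)), range_eq_Ico, prod_Ico_add',
    Ico_add_one_right_eq_Icc, zero_add]

section

variable {r : ℕ} {g : Fin r → Fin r}

theorem card_rootFibres : #(rootFibres g) = #(fixedPts g) := by
  refine card_image_of_injOn fun p hp q hq hpq => ?_
  have hp' : p ∈ univ.filter (fun i => root g i = q) := by
    rw [← hpq]; simp [root_eq_self (mem_fixedPts.mp hp)]
  rw [← root_eq_self (mem_fixedPts.mp hp)]
  exact (mem_filter.mp hp').2

theorem prod_xWeight_apply (g : Fin r → Fin r) :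
    ∏ i : Fin r, xWeight r (i + 1) (g i + 1)
      = ∏ a ∈ Icc 1 r, if a ∈ (fixedPts g).image (fun p => p.val + 1)
          then (if a = r then 1 else prefixSum a) else x a := by
  rw [← prod_univ_val_add_one]
  refine prod_congr rfl fun i _ => ?_
  have hfixed : (i : ℕ) + 1 ∈ (fixedPts g).image (fun p => p.val + 1) ↔ g i = i := by
    simp only [mem_image, mem_fixedPts, Nat.add_right_cancel_iff, ← Fin.ext_iff]
    exact ⟨fun ⟨p, hp, hpi⟩ => hpi ▸ hp, fun h => ⟨i, h, rfl⟩⟩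
  simp only [xWeight, hfixed, Fin.ext_iff, Nat.add_right_cancel_iff]

namespace Dominating

theorem image_sup_rootFibres (hg : Dominating g) :
    (rootFibres g).image (fun B => B.sup (fun v => v.val + 1))
      = (fixedPts g).image (fun p => p.val + 1) := by
  rw [rootFibres, image_image]
  refine image_congr fun p hp => le_antisymm (Finset.sup_le fun v hv => ?_) ?_
  · have hv' := hg.le_root v
    rw [(mem_filter.mp hv).2, Fin.le_def] at hv'
    exact Nat.succ_le_succ hv'
  · exact le_sup (f := fun v : Fin r => v.val + 1)
      (by simp [root_eq_self (mem_fixedPts.mp hp)] : p ∈ univ.filter (fun i => root g i = p))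

theorem sum_C_omega_rootFibres [NeZero r] (hr : 2 ≤ r) (hg : Dominating g) (h0 : g 0 = 0) :
    ∑ c ∈ C (rootFibres g), omega (rootFibres g) c
      = ∏ i : Fin r, xWeight r (i + 1) (g i + 1) := by
  rw [prod_xWeight_apply]
  set S := (fixedPts g).image (fun p => p.val + 1)
  have hk : #(rootFibres g) = #S := by
    rw [card_rootFibres, card_image_of_injective _ fun a b h => Fin.ext (by simpa using h)]
  have hmu : ∀ i, mu (rootFibres g) i = (S.sort (· ≤ ·)).getD (i - 1) 0 := by
    intro i; rw [mu, hg.image_sup_rootFibres]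
  have hSIcc : S ⊆ Icc 1 r := by
    intro s hs
    obtain ⟨p, -, rfl⟩ := mem_image.mp hs
    simp only [mem_Icc]; omega
  have h1 : 1 ∈ S := mem_image.mpr ⟨0, mem_fixedPts.mpr h0, by simp⟩
  have hrS : r ∈ S := mem_image.mpr ⟨⟨r - 1, by omega⟩,
    mem_fixedPts.mpr (le_antisymm (Fin.le_def.mpr (by simp; omega)) (hg _)), by simp; omega⟩
  have hmin : S.min' ⟨1, h1⟩ = 1 :=
    le_antisymm (S.min'_le 1 h1) (S.le_min' _ _ fun s hs => (mem_Icc.mp (hSIcc hs)).1)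
  have hmax : S.max' ⟨1, h1⟩ = r :=
    le_antisymm (S.max'_le _ _ fun s hs => (mem_Icc.mp (hSIcc hs)).2) (S.le_max' r hrS)
  have hk1 : 1 ≤ #S := card_pos.mpr ⟨1, h1⟩
  have hnum : Icc 2 (#S - 1) = Icc 1 #S \ {1, #S} := by ext; simp; omega
  have hden : Icc 2 #S = Icc 1 #S \ {1} := by ext; simp; omega
  rw [sum_C_omega, hk]
  simp only [hmu]
  rw [hnum, hden, prod_Icc_sdiff_sort_getD_pred S 0 (by intro; simp; omega),
    prod_Icc_sdiff_sort_getD_pred S 0 (by intro; simp; omega), image_insert, image_singleton,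
    image_singleton, Nat.sub_self, sort_getD_zero S 0 ⟨1, h1⟩,
    sort_getD_card_sub_one S 0 ⟨1, h1⟩, hmin, hmax]
  exact prod_prefixSum_div_prod_mul_prod_x hSIcc h1 hrS (by omega)

end Dominating

end

section

variable {r : ℕ} [NeZero r]

def allowed (i : Fin r) : Finset (Fin r) := if i = 0 then {0} else Ici i

theorem mem_piFinset_allowed {g : Fin r → Fin r} :
    g ∈ Fintype.piFinset allowed ↔ Dominating g ∧ g 0 = 0 := by
  simp only [Fintype.mem_piFinset, allowed]
  refine ⟨fun h => ⟨fun i => ?_, by simpa using h 0⟩, fun ⟨hg, h0⟩ i => ?_⟩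
  · have hi := h i
    split_ifs at hi with hi0
    · exact hi0 ▸ Fin.zero_le _
    · exact mem_Ici.mp hi
  · split_ifs with hi0
    · simp [hi0, h0]
    · exact mem_Ici.mpr (hg i)

theorem sum_isPartition1_D_mul (W : Finset (Finset (Fin r)) → F) :
    ∑ π ∈ univ.filter (fun π : Finset (Finset (Fin r)) => IsPartition1 π), D π * W π
      = ∑ g ∈ Fintype.piFinset allowed,
          (∏ i : Fin r, y (i.val + 1) ((g i).val + 1)) * W (rootFibres g) := by
  simp only [D, sum_mul]
  rw [sum_comm' (t' := Fintype.piFinset allowed) (s' := fun g => {rootFibres g})]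
  · simp only [sum_singleton]
  · intro π g
    simp only [mem_filter, mem_univ, true_and, mem_singleton, mem_piFinset_allowed]
    constructor
    · rintro ⟨hπ, hg, hind⟩
      obtain ⟨h0, rfl⟩ := hg.isPartition1_and_induces_iff.mp ⟨hπ, hind⟩
      exact ⟨rfl, hg, h0⟩
    · rintro ⟨rfl, hg, h0⟩
      obtain ⟨hπ, hind⟩ := hg.isPartition1_and_induces_iff.mpr ⟨h0, rfl⟩
      exact ⟨hπ, hg, hind⟩

theorem prod_sum_allowed {R : Type*} [CommSemiring R] (w : ℕ → ℕ → R) :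
    ∏ i : Fin r, ∑ v ∈ allowed i, w (i + 1) (v + 1)
      = w 1 1 * ∏ a ∈ Icc 2 r, ∑ b ∈ Icc a r, w a b := by
  let Φ a := if a = 1 then w 1 1 else ∑ b ∈ Icc a r, w a b
  have hrow : ∀ i : Fin r, ∑ v ∈ allowed i, w (i + 1) (v + 1) = Φ (i + 1) := by
    intro i
    by_cases hi : i = 0
    · simp [Φ, allowed, hi]
    · have hi' : (i : ℕ) ≠ 0 := fun h => hi (Fin.ext (by rw [h, Fin.val_zero]))
      simp only [allowed, if_neg hi, Φ, if_neg (show (i : ℕ) + 1 ≠ 1 by omega)]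
      exact sum_Ici_val_add_one i (w (i + 1))
  rw [prod_congr rfl fun i _ => hrow i, prod_univ_val_add_one, ← insert_Icc_add_one_left_eq_Icc
    (by have := NeZero.pos r; omega), prod_insert (by simp)]
  exact congrArg _ (prod_congr rfl fun a ha => if_neg (by simp at ha; omega))

end

/-- **Proposition 2.2(b) of Féray–Goulden–Lascoux.**  For `r ≥ 2`,
`y_{1,1} · R(x,y) = ∑_{π ∈ Π_1({1,…,r})} D(π) ∑_{c ∈ C(π)} ω(c,π)`, where
`R(x,y) = x_1 y_{r,r} ∏_{i=2}^{r-1}((∑_{j=1}^i x_j) y_{i,i} + ∑_{j=i+1}^r x_i y_{i,j})`. -/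
theorem right_side_dominating_expansion (r : ℕ) (hr : 2 ≤ r) :
    y 1 1 * (x 1 * y r r *
        ∏ i ∈ Finset.Icc 2 (r - 1),
          ((∑ j ∈ Finset.Icc 1 i, x j) * y i i +
            ∑ j ∈ Finset.Icc (i + 1) r, x i * y i j))
    = ∑ π ∈ Finset.univ.filter (fun π : Finset (Finset (Fin r)) => IsPartition1 π),
        D π * ∑ c ∈ C π, omega π c := by
  have : NeZero r := ⟨by omega⟩
  have per_g : ∀ g ∈ Fintype.piFinset allowed,
      (∏ i : Fin r, y (i.val + 1) ((g i).val + 1)) * ∑ c ∈ C (rootFibres g), omega _ c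
        = ∏ i : Fin r, y (i + 1) (g i + 1) * xWeight r (i + 1) (g i + 1) := by
    intro g hg
    obtain ⟨hdom, h0⟩ := mem_piFinset_allowed.mp hg
    rw [hdom.sum_C_omega_rootFibres hr h0, prod_mul_distrib]
  rw [sum_isPartition1_D_mul, sum_congr rfl per_g,
    ← prod_univ_sum allowed (fun i v => y (i + 1) (v + 1) * xWeight r (i + 1) (v + 1)),
    prod_sum_allowed (fun a b => y a b * xWeight r a b)]
  obtain ⟨m, rfl⟩ : ∃ m, r = m + 1 := ⟨r - 1, by omega⟩
  rw [prod_Icc_succ_top (by omega), Icc_self, sum_singleton, Nat.add_sub_cancel,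
    prod_congr rfl fun a ha => sum_Icc_xWeight (by simp at ha; omega)]
  simp only [xWeight, prefixSum, ↓reduceIte, if_neg (show 1 ≠ m + 1 by omega), Icc_self,
    sum_singleton]
  ring
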